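/- (Main Lemma) For G-orbits l, l', l'' in Λ and G-conjugacy classes c, c', c'': ξ(l',c';l)·ξ(l'',c'';l)·S^{c(l)}_{c'(l),c''(l)} = Σ_{l̃} ξ(l̃,c;l)·P^{(l̃,c)}_{(l',c'),(l'',c'')}, where the sum runs over orbits l̃ ⪯ l. -/

import Mathlib

/-!
Both sides count the pairs `(p, q)` of partial elements in the classes `(l', c')`, `(l'', c'')`
whose product is `(λ̃, h)` with `λ̃ ⪯ λ`. Sorting them by their group parts `(a, b)` runs over
the `S` factorizations `h = a b` in `G_λ`; since `a` is conjugate to `h'` by an element of `G_λ`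
(which fixes `λ`), the possible supports of `p` number `ξ(l', c'; l)` for every `a`, and
likewise for `q`. Sorting them instead by the orbit `l̃` of `λ̃` gives `ξ(l̃, c; l)` choices of
`λ̃`, each carrying `P` pairs, since conjugating by an element that fixes `h` moves `λ̃` to the
representative of `l̃`.
-/

open scoped Classical

/-- An admissible set of data `(Λ, G, η)` in the sense of Ivanov–Kerov /
Alekseevski–Natanzon: a poset `Λ` with least element and binary suprema, a group
`G` acting on `Λ` by order automorphisms, and a `G`-equivariant monotone family
of finite subgroups `G_λ = η λ` satisfying the admissibility axioms (in
particular axiom 5: partial elements lying below a common `λ` that are conjugate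
in `G` are conjugate in `G_λ`, and its consequence that a `G`-conjugacy class
meets each `G_λ` in at most one `G_λ`-class). -/
structure AdmissibleData (G Λ : Type*) [Group G] [PartialOrder Λ] [OrderBot Λ]
    [MulAction G Λ] where
  wedge : Λ → Λ → Λ
  isLUB_wedge : ∀ a b : Λ, IsLUB {a, b} (wedge a b)
  eta : Λ → Subgroup G
  eta_mono : Monotone eta
  eta_bot : eta ⊥ = ⊥
  smul_le_iff : ∀ (g : G) (a b : Λ), a ≤ b ↔ g • a ≤ g • b
  eta_equivariant : ∀ (g : G) (a : Λ) (x : G), x ∈ eta a ↔ g * x * g⁻¹ ∈ eta (g • a)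
  eta_stabilizes : ∀ (a : Λ) (g : G), g ∈ eta a → g • a = a
  eta_finite : ∀ a : Λ, (eta a : Set G).Finite
  pred_finite : ∀ a : Λ, {b : Λ | b ≤ a}.Finite
  conj_cond : ∀ (lam lam' lam'' : Λ) (h' h'' : G), lam' ≤ lam → lam'' ≤ lam →
    h' ∈ eta lam' → h'' ∈ eta lam'' →
    (∃ g : G, g • lam' = lam'' ∧ g * h' * g⁻¹ = h'') →
    ∃ g ∈ eta lam, g • lam' = lam'' ∧ g * h' * g⁻¹ = h''
  conj_in_sub : ∀ (a : Λ) (x y : G), x ∈ eta a → y ∈ eta a → IsConj x y →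
    ∃ g ∈ eta a, g * x * g⁻¹ = y

variable {G Λ : Type*} [Group G] [PartialOrder Λ] [OrderBot Λ] [MulAction G Λ]

/-- Partial elements: pairs `(λ, h)` with `h ∈ G_λ`. -/
abbrev PartialElt (D : AdmissibleData G Λ) : Type _ := {p : Λ × G // p.2 ∈ D.eta p.1}

/-- Conjugation of partial elements: `g • (λ, h) = (g•λ, g h g⁻¹)`; two partial
elements are equivalent iff they lie in the same `G`-orbit (conjugacy class). -/
def orbSetoid (D : AdmissibleData G Λ) : Setoid (PartialElt D) where
  r p q := ∃ g : G, g • p.val.1 = q.val.1 ∧ g * p.val.2 * g⁻¹ = q.val.2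
  iseqv := by
    constructor
    · intro p; exact ⟨1, by simp, by simp⟩
    · rintro p q ⟨g, h1, h2⟩
      exact ⟨g⁻¹, by rw [← h1, inv_smul_smul], by rw [← h2]; group⟩
    · rintro p q r ⟨g, h1, h2⟩ ⟨g', h1', h2'⟩
      exact ⟨g' * g, by rw [mul_smul, h1, h1'], by rw [← h2', ← h2]; group⟩

/-- Conjugacy classes of partial elements (the index set `Ω` of the basis of the
generalized Ivanov–Kerov algebra). -/
abbrev Orb (D : AdmissibleData G Λ) : Type _ := Quotient (orbSetoid D)

/-- Structure constant of the generalized IK-algebra: the number of pairs of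
partial elements in the classes `ω', ω''` whose product is exactly the given
partial element `(λ, h)`. -/
noncomputable def Pconst (D : AdmissibleData G Λ) (ω' ω'' : Orb D) (lam : Λ) (h : G) : ℕ :=
  Nat.card {pq : PartialElt D × PartialElt D //
    Quotient.mk (orbSetoid D) pq.1 = ω' ∧ Quotient.mk (orbSetoid D) pq.2 = ω'' ∧
    D.wedge pq.1.val.1 pq.2.val.1 = lam ∧ pq.1.val.2 * pq.2.val.2 = h}

/-- `ξ(l', c; l)` computed from representatives: the number of `μ` in the
`G`-orbit of `lam'` with `μ ⪯ lam` and `h ∈ G_μ`. -/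
noncomputable def xiConst (D : AdmissibleData G Λ) (lam' : Λ) (h : G) (lam : Λ) : ℕ :=
  Nat.card {μ : Λ // (∃ g : G, g • lam' = μ) ∧ μ ≤ lam ∧ h ∈ D.eta μ}

/-- Structure constant `S^{c(λ)}_{c'(λ), c''(λ)}` of the center `Z(k[G_λ])`: the
number of factorizations `h = a·b` inside `G_λ` with `a` conjugate (in `G`) to
`x'` and `b` conjugate to `x''`. -/
noncomputable def Sconst (D : AdmissibleData G Λ) (x' x'' : G) (lam : Λ) (h : G) : ℕ :=
  Nat.card {ab : G × G // ab.1 ∈ D.eta lam ∧ ab.2 ∈ D.eta lam ∧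
    IsConj x' ab.1 ∧ IsConj x'' ab.2 ∧ ab.1 * ab.2 = h}

theorem Nat.card_eq_sum_card_of_existsUnique {α ι : Type*} {s : Set α} (hs : s.Finite)
    (T : Finset ι) (r : α → ι → Prop) (hr : ∀ a ∈ s, ∃! t, t ∈ T ∧ r a t) :
    Nat.card s = ∑ t ∈ T, Nat.card {a | a ∈ s ∧ r a t} := by
  choose f hf hf_unique using hr
  have : Finite s := hs.to_subtype
  let F : s → T := fun a => ⟨f a a.2, (hf a a.2).1⟩
  have hF : ∀ (a : s) (t : T), F a = t ↔ r a t := fun a t =>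
    ⟨fun h => h ▸ (hf a a.2).2, fun h => Subtype.ext (hf_unique a a.2 t ⟨t.2, h⟩).symm⟩
  rw [← Nat.card_congr (Equiv.sigmaFiberEquiv F), Nat.card_sigma, ← Finset.sum_coe_sort T]
  refine Fintype.sum_congr _ _ fun t => Nat.card_congr ?_
  exact (Equiv.subtypeEquivRight fun a => hF a t).trans
    (Equiv.subtypeSubtypeEquivSubtypeInter (· ∈ s) (r · t))

theorem Nat.card_eq_card_mul_of_card_fiber {α β : Type*} {s : Set α} {t : Set β}
    (hs : s.Finite) (ht : t.Finite) (f : α → β) (hf : ∀ a ∈ s, f a ∈ t) (c : ℕ)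
    (hc : ∀ b ∈ t, Nat.card {a | a ∈ s ∧ f a = b} = c) :
    Nat.card s = Nat.card t * c := by
  rw [Nat.card_eq_sum_card_of_existsUnique hs ht.toFinset (fun a b => f a = b)
      fun a ha => ⟨f a, by simpa using hf a ha, fun b hb => hb.2.symm⟩,
    Finset.sum_congr rfl fun b hb => hc b (by simpa using hb), Finset.sum_const, smul_eq_mul,
    Nat.card_eq_card_finite_toFinset ht]

namespace AdmissibleData

variable (D : AdmissibleData G Λ)

theorem wedge_le_iff {a b c : Λ} : D.wedge a b ≤ c ↔ a ≤ c ∧ b ≤ c := by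
  simp [isLUB_le_iff (D.isLUB_wedge a b), upperBounds_insert]

theorem le_wedge_left (a b : Λ) : a ≤ D.wedge a b := (D.wedge_le_iff.mp le_rfl).1

theorem le_wedge_right (a b : Λ) : b ≤ D.wedge a b := (D.wedge_le_iff.mp le_rfl).2

theorem smul_wedge (g : G) (a b : Λ) : D.wedge (g • a) (g • b) = g • D.wedge a b := by
  have key : ∀ c, D.wedge a b ≤ c ↔ D.wedge (g • a) (g • b) ≤ g • c := fun c => by
    simp only [wedge_le_iff, ← D.smul_le_iff]
  refine le_antisymm ((key _).mp le_rfl) ?_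
  rw [← smul_inv_smul g (D.wedge (g • a) (g • b)), ← D.smul_le_iff, key, smul_inv_smul]

theorem mul_mem_eta_wedge {x y : G} {μ ν : Λ} (hx : x ∈ D.eta μ) (hy : y ∈ D.eta ν) :
    x * y ∈ D.eta (D.wedge μ ν) :=
  mul_mem (D.eta_mono (D.le_wedge_left μ ν) hx) (D.eta_mono (D.le_wedge_right μ ν) hy)

end AdmissibleData

namespace PartialElt

variable {D : AdmissibleData G Λ}

instance : SMul G (PartialElt D) :=
  ⟨fun g p => ⟨(g • p.val.1, g * p.val.2 * g⁻¹), (D.eta_equivariant g _ _).mp p.2⟩⟩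

@[simp] theorem smul_fst (g : G) (p : PartialElt D) : (g • p).val.1 = g • p.val.1 := rfl

@[simp] theorem smul_snd (g : G) (p : PartialElt D) : (g • p).val.2 = g * p.val.2 * g⁻¹ := rfl

instance : MulAction G (PartialElt D) where
  one_smul p := Subtype.ext (Prod.ext (one_smul G _) (by simp))
  mul_smul g g' p := Subtype.ext (Prod.ext (mul_smul g g' _) (by simp [mul_assoc]))

theorem mk_smul (g : G) (p : PartialElt D) :
    Quotient.mk (orbSetoid D) (g • p) = Quotient.mk (orbSetoid D) p :=
  (Quotient.sound (⟨g, rfl, rfl⟩ : (orbSetoid D).r p (g • p))).symm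

theorem isConj_of_mk_eq {p q : PartialElt D}
    (hpq : Quotient.mk (orbSetoid D) p = Quotient.mk (orbSetoid D) q) :
    IsConj p.val.2 q.val.2 := by
  obtain ⟨g, -, hg⟩ := Quotient.exact hpq
  exact isConj_iff.mpr ⟨g, hg⟩

end PartialElt

section Counting

variable (D : AdmissibleData G Λ)

theorem AdmissibleData.exists_smul_eq_of_isConj {a b : Λ} {x y : G} (hx : x ∈ D.eta a)
    (hy : y ∈ D.eta b) (hab : ∃ g : G, g • a = b) (hxy : IsConj x y) :
    ∃ g : G, g • a = b ∧ g * x * g⁻¹ = y := by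
  obtain ⟨g, rfl⟩ := hab
  have hgx : g * x * g⁻¹ ∈ D.eta (g • a) := (D.eta_equivariant g a x).mp hx
  have hconj : IsConj (g * x * g⁻¹) y := (isConj_iff.mpr ⟨g, rfl⟩).symm.trans hxy
  obtain ⟨k, hk, rfl⟩ := D.conj_in_sub _ _ _ hgx hy hconj
  exact ⟨k * g, by rw [mul_smul, D.eta_stabilizes _ k hk], by group⟩

theorem Pconst_smul (ω' ω'' : Orb D) (g : G) (μ : Λ) (h : G) :
    Pconst D ω' ω'' (g • μ) (g * h * g⁻¹) = Pconst D ω' ω'' μ h := by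
  refine (Nat.card_congr (Equiv.subtypeEquiv
    ((MulAction.toPerm g).prodCongr (MulAction.toPerm g)) fun pq => ?_)).symm
  simp [PartialElt.mk_smul, D.smul_wedge, conj_mul]

theorem xiConst_smul (lam' : Λ) (g h : G) (lam : Λ) :
    xiConst D lam' (g * h * g⁻¹) (g • lam) = xiConst D lam' h lam := by
  refine (Nat.card_congr (Equiv.subtypeEquiv (MulAction.toPerm g) fun μ => ?_)).symm
  simp only [MulAction.toPerm_apply, ← D.smul_le_iff, ← D.eta_equivariant]
  exact and_congr_left' ⟨fun ⟨g', e⟩ => ⟨g * g', by rw [mul_smul, e]⟩,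
    fun ⟨g', e⟩ => ⟨g⁻¹ * g', by rw [mul_smul, e, inv_smul_smul]⟩⟩

theorem xiConst_eq_of_isConj (lam' : Λ) {x y : G} {lam : Λ} (hx : x ∈ D.eta lam)
    (hy : y ∈ D.eta lam) (hxy : IsConj x y) : xiConst D lam' y lam = xiConst D lam' x lam := by
  obtain ⟨k, hk, rfl⟩ := D.conj_in_sub lam x y hx hy hxy
  conv_lhs => rw [← D.eta_stabilizes lam k hk]
  exact xiConst_smul D lam' k x lam

theorem card_class_fiber_eq_xiConst (p₀ : PartialElt D) {a : G} (ha : IsConj p₀.val.2 a)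
    (lam : Λ) :
    Nat.card {p : PartialElt D | Quotient.mk (orbSetoid D) p = Quotient.mk (orbSetoid D) p₀ ∧
      p.val.2 = a ∧ p.val.1 ≤ lam} = xiConst D p₀.val.1 a lam := by
  refine Nat.card_congr
    { toFun := fun p => ⟨p.val.val.1, ?_, p.2.2.2, ?_⟩
      invFun := fun μ => ⟨⟨(μ.val, a), μ.2.2.2⟩, ?_, rfl, μ.2.2.1⟩
      left_inv := fun p => Subtype.ext (Subtype.ext (Prod.ext rfl p.2.2.1.symm))
      right_inv := fun μ => rfl }
  · obtain ⟨g, hg, -⟩ := Quotient.exact p.2.1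
    exact ⟨g⁻¹, inv_smul_eq_iff.mpr hg.symm⟩
  · obtain ⟨⟨_, hmem⟩, -, rfl, -⟩ := p
    exact hmem
  · obtain ⟨g, hg⟩ := μ.2.1
    exact Quotient.sound (D.exists_smul_eq_of_isConj μ.2.2.2 p₀.2
      ⟨g⁻¹, inv_smul_eq_iff.mpr hg.symm⟩ ha.symm)

theorem finite_partialElt_le (lam : Λ) : {p : PartialElt D | p.val.1 ≤ lam}.Finite :=
  (((D.pred_finite lam).prod (D.eta_finite lam)).preimage Subtype.val_injective.injOn).subset
    fun p hp => ⟨hp, D.eta_mono hp p.2⟩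

def factorizationsBelow (ω' ω'' : Orb D) (lam : Λ) (h : G) : Set (PartialElt D × PartialElt D) :=
  {pq | Quotient.mk (orbSetoid D) pq.1 = ω' ∧ Quotient.mk (orbSetoid D) pq.2 = ω'' ∧
    pq.1.val.2 * pq.2.val.2 = h ∧ D.wedge pq.1.val.1 pq.2.val.1 ≤ lam}

theorem finite_factorizationsBelow (ω' ω'' : Orb D) (lam : Λ) (h : G) :
    (factorizationsBelow D ω' ω'' lam h).Finite :=
  ((finite_partialElt_le D lam).prod (finite_partialElt_le D lam)).subset
    fun _ hpq => D.wedge_le_iff.mp hpq.2.2.2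

theorem card_factorizationsBelow_eq_Sconst_mul (p' p'' : PartialElt D) (lam : Λ) (h : G)
    (hp' : p'.val.2 ∈ D.eta lam) (hp'' : p''.val.2 ∈ D.eta lam) :
    Nat.card (factorizationsBelow D (Quotient.mk _ p') (Quotient.mk _ p'') lam h) =
      Sconst D p'.val.2 p''.val.2 lam h *
        (xiConst D p'.val.1 p'.val.2 lam * xiConst D p''.val.1 p''.val.2 lam) := by
  refine Nat.card_eq_card_mul_of_card_fiber (finite_factorizationsBelow D _ _ lam h)
    (((D.eta_finite lam).prod (D.eta_finite lam)).subset fun _ hab => ⟨hab.1, hab.2.1⟩)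
    (fun pq => (pq.1.val.2, pq.2.val.2)) ?_ _ ?_
  · rintro ⟨p, q⟩ ⟨hp, hq, hpq, hle⟩
    obtain ⟨hpl, hql⟩ := D.wedge_le_iff.mp hle
    exact ⟨D.eta_mono hpl p.2, D.eta_mono hql q.2, (PartialElt.isConj_of_mk_eq hp).symm,
      (PartialElt.isConj_of_mk_eq hq).symm, hpq⟩
  · rintro ⟨a, b⟩ ⟨ha, hb, hca, hcb, hab⟩
    have hfiber : {pq | pq ∈ factorizationsBelow D (Quotient.mk _ p') (Quotient.mk _ p'') lam h ∧
        (pq.1.val.2, pq.2.val.2) = (a, b)} =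
        {p | Quotient.mk (orbSetoid D) p = Quotient.mk _ p' ∧ p.val.2 = a ∧ p.val.1 ≤ lam} ×ˢ
        {q | Quotient.mk (orbSetoid D) q = Quotient.mk _ p'' ∧ q.val.2 = b ∧ q.val.1 ≤ lam} := by
      ext ⟨p, q⟩
      simp only [factorizationsBelow, D.wedge_le_iff, Set.mem_ofPred_eq, Set.mem_prod,
        Prod.mk.injEq]
      constructor
      · rintro ⟨⟨hp, hq, -, hpl, hql⟩, rfl, rfl⟩
        exact ⟨⟨hp, rfl, hpl⟩, hq, rfl, hql⟩
      · rintro ⟨⟨hp, rfl, hpl⟩, hq, rfl, hql⟩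
        exact ⟨⟨hp, hq, hab, hpl, hql⟩, rfl, rfl⟩
    rw [hfiber, Nat.card_congr (Equiv.Set.prod _ _), Nat.card_prod,
      card_class_fiber_eq_xiConst D p' hca, card_class_fiber_eq_xiConst D p'' hcb,
      xiConst_eq_of_isConj D _ hp' ha hca, xiConst_eq_of_isConj D _ hp'' hb hcb]

theorem card_factorizationsBelow_inter_orbit (ω' ω'' : Orb D) {lam t : Λ} {h : G}
    (hht : h ∈ D.eta t) :
    Nat.card {pq | pq ∈ factorizationsBelow D ω' ω'' lam h ∧
        ∃ g : G, g • D.wedge pq.1.val.1 pq.2.val.1 = t} =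
      xiConst D t h lam * Pconst D ω' ω'' t h := by
  refine Nat.card_eq_card_mul_of_card_fiber
    ((finite_factorizationsBelow D ω' ω'' lam h).subset fun _ hpq => hpq.1)
    ((D.pred_finite lam).subset fun _ hμ => hμ.2.1)
    (fun pq => D.wedge pq.1.val.1 pq.2.val.1) ?_ _ ?_
  · rintro ⟨p, q⟩ ⟨⟨-, -, rfl, hle⟩, g, hg⟩
    exact ⟨⟨g⁻¹, inv_smul_eq_iff.mpr hg.symm⟩, hle, D.mul_mem_eta_wedge p.2 q.2⟩
  · rintro μ ⟨hμt, hμ, hhμ⟩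
    obtain ⟨g, hg, hgh⟩ := D.exists_smul_eq_of_isConj hhμ hht
      (by obtain ⟨g, rfl⟩ := hμt; exact ⟨g⁻¹, inv_smul_smul g t⟩) (IsConj.refl h)
    have hP : Pconst D ω' ω'' t h = Pconst D ω' ω'' μ h := by
      rw [← Pconst_smul D ω' ω'' g μ h, hg, hgh]
    rw [hP]
    refine Nat.card_congr (Equiv.subtypeEquivRight fun pq => ?_)
    constructor
    · rintro ⟨⟨⟨hp, hq, hpq, -⟩, -⟩, hw⟩
      exact ⟨hp, hq, hw, hpq⟩
    · rintro ⟨hp, hq, hw, hpq⟩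
      exact ⟨⟨⟨hp, hq, hpq, hw ▸ hμ⟩, ⟨g, hw ▸ hg⟩⟩, hw⟩

end Counting

theorem stmt12_general (D : AdmissibleData G Λ)
    (lam lam' lam'' : Λ) (h h' h'' : G)
    (hmem' : h' ∈ D.eta lam') (hmem'' : h'' ∈ D.eta lam'')
    (hmem'l : h' ∈ D.eta lam) (hmem''l : h'' ∈ D.eta lam)
    (T : Finset Λ)
    (hTsub : ∀ t ∈ T, t ≤ lam ∧ h ∈ D.eta t)
    (hT : ∀ μ : Λ, μ ≤ lam → h ∈ D.eta μ → ∃! t, t ∈ T ∧ ∃ g : G, g • μ = t) :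
    xiConst D lam' h' lam * xiConst D lam'' h'' lam * Sconst D h' h'' lam h =
      ∑ t ∈ T, xiConst D t h lam *
        Pconst D (Quotient.mk (orbSetoid D) ⟨(lam', h'), hmem'⟩)
          (Quotient.mk (orbSetoid D) ⟨(lam'', h''), hmem''⟩) t h := by
  set ω' := Quotient.mk (orbSetoid D) (⟨(lam', h'), hmem'⟩ : PartialElt D)
  set ω'' := Quotient.mk (orbSetoid D) (⟨(lam'', h''), hmem''⟩ : PartialElt D)
  calc xiConst D lam' h' lam * xiConst D lam'' h'' lam * Sconst D h' h'' lam h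
      = Nat.card (factorizationsBelow D ω' ω'' lam h) := by
        rw [card_factorizationsBelow_eq_Sconst_mul D _ _ lam h hmem'l hmem''l]
        ring
    _ = ∑ t ∈ T, Nat.card {pq | pq ∈ factorizationsBelow D ω' ω'' lam h ∧
          ∃ g : G, g • D.wedge pq.1.val.1 pq.2.val.1 = t} := by
        refine Nat.card_eq_sum_card_of_existsUnique (finite_factorizationsBelow D _ _ lam h) T _ ?_
        rintro ⟨p, q⟩ ⟨-, -, rfl, hle⟩
        exact hT _ hle (D.mul_mem_eta_wedge p.2 q.2)
    _ = _ := Finset.sum_congr rfl fun t ht =>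
        card_factorizationsBelow_inter_orbit D ω' ω'' (hTsub t ht).2

/-- Main Lemma: for `G`-orbits `l ∋ lam`, `l' ∋ lam'`, `l'' ∋ lam''`
and conjugacy classes `c ∋ h`, `c' ∋ h'`, `c'' ∋ h''` (with `h ∈ G_λ` and the
representatives `h', h''` of `c', c''` chosen in `G_λ` as well):
`ξ(l',c';l)·ξ(l'',c'';l)·S^{c(l)}_{c'(l),c''(l)} = Σ_{l̃} ξ(l̃,c;l)·P^{(l̃,c)}_{(l',c'),(l'',c'')}`,
the sum running over a transversal `T` of the `G`-orbits `l̃ ⪯ l` whose members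
contain `h` in their subgroup. -/
theorem stmt12 (D : AdmissibleData G Λ)
    (lam lam' lam'' : Λ) (h h' h'' : G)
    (hmem : h ∈ D.eta lam)
    (hmem' : h' ∈ D.eta lam') (hmem'' : h'' ∈ D.eta lam'')
    (hmem'l : h' ∈ D.eta lam) (hmem''l : h'' ∈ D.eta lam)
    (T : Finset Λ)
    (hTsub : ∀ t ∈ T, t ≤ lam ∧ h ∈ D.eta t)
    (hT : ∀ μ : Λ, μ ≤ lam → h ∈ D.eta μ → ∃! t, t ∈ T ∧ ∃ g : G, g • μ = t) :
    xiConst D lam' h' lam * xiConst D lam'' h'' lam * Sconst D h' h'' lam h =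
      ∑ t ∈ T, xiConst D t h lam *
        Pconst D (Quotient.mk (orbSetoid D) ⟨(lam', h'), hmem'⟩)
          (Quotient.mk (orbSetoid D) ⟨(lam'', h''), hmem''⟩) t h :=
  stmt12_general D lam lam' lam'' h h' h'' hmem' hmem'' hmem'l hmem''l T hTsub hT
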